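/- For nonincreasing nonnegative integer vectors satisfying n_1 ≺ m_1 ≺ n_2 ≺ m_2 (all with equal sum N), the runtime expression T(n,m) = (∑_{k=0}^M X_k(m)) · α_n · α_m satisfies T(n_1, m_1) ≥ T(n_2, m_2). -/

import Mathlib

/-!
If `x` is nonincreasing and `x ≺ y`, then past a zero of `x` all the mass of `x`, hence of `y`,
lies in the prefix, so the support of `y` is contained in that of `x` and `α` decreases along
the chain. The factor `∑ₖ X_k(m) = ∏ᵢ (mᵢ + 1)` is Schur-concave: this is Karamata's inequality
for the concave function `log (1 + t)`, proved by Abel summation against its slopes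
`1 / (1 + xᵢ)`, which increase because `x` is nonincreasing. Since `m₁ ≺ m₂` by transitivity,
`T(n₁, m₁) ≥ T(n₂, m₂)` follows factor by factor.
-/

open Finset

/-- Majorization of integer vectors via partial-sum domination with equal total sums. -/
def Maj {M : ℕ} (x y : Fin M → ℕ) : Prop :=
  (∀ k : ℕ, k < M → ∑ i ∈ univ.filter (fun i : Fin M => (i : ℕ) < k), x i ≤
      ∑ i ∈ univ.filter (fun i : Fin M => (i : ℕ) < k), y i) ∧
    ∑ i, x i = ∑ i, y i

/-- Elementary symmetric polynomial of degree `k` (with `X_0 = 1`). -/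
def esymm {M : ℕ} (k : ℕ) (n : Fin M → ℕ) : ℕ :=
  ∑ S ∈ (univ : Finset (Fin M)).powersetCard k, ∏ i ∈ S, n i

/-- Number of nonzero entries. -/
def alpha {M : ℕ} (n : Fin M → ℕ) : ℕ :=
  (univ.filter (fun i : Fin M => n i ≠ 0)).card

/-- The runtime expression `T(n, m) = (∑_{k=0}^M X_k(m)) · α_n · α_m`. -/
def T {M : ℕ} (n m : Fin M → ℕ) : ℕ :=
  (∑ k ∈ Finset.range (M + 1), esymm k m) * alpha n * alpha m

theorem Finset.sum_range_mul_nonpos_of_monotone {c d : ℕ → ℝ} {n : ℕ} (hc : Monotone c)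
    (hd : ∀ k < n, 0 ≤ ∑ i ∈ range k, d i) (hsum : ∑ i ∈ range n, d i = 0) :
    ∑ i ∈ range n, c i * d i ≤ 0 := by
  have hparts := sum_range_by_parts c d n
  simp only [smul_eq_mul] at hparts
  rw [hparts, hsum, mul_zero, zero_sub, neg_nonpos]
  refine sum_nonneg fun i hi => mul_nonneg (sub_nonneg.2 (hc i.le_succ)) (hd _ ?_)
  rw [mem_range] at hi
  omega

theorem prod_range_add_one_le_of_sum_range_le {x y : ℕ → ℕ} {n : ℕ} (hx : Antitone x)
    (hle : ∀ k < n, ∑ i ∈ range k, x i ≤ ∑ i ∈ range k, y i)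
    (hsum : ∑ i ∈ range n, x i = ∑ i ∈ range n, y i) :
    ∏ i ∈ range n, (y i + 1) ≤ ∏ i ∈ range n, (x i + 1) := by
  have hpos (z : ℕ → ℕ) (i : ℕ) : (0 : ℝ) < z i + 1 := by positivity
  have hlog (i : ℕ) : Real.log (y i + 1) - Real.log (x i + 1) ≤
      (x i + 1 : ℝ)⁻¹ * ((y i : ℝ) - x i) := by
    rw [← Real.log_div (hpos y i).ne' (hpos x i).ne']
    refine (Real.log_le_sub_one_of_pos (div_pos (hpos y i) (hpos x i))).trans_eq ?_
    field_simp
    ring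
  have habel : ∑ i ∈ range n, (x i + 1 : ℝ)⁻¹ * ((y i : ℝ) - x i) ≤ 0 := by
    refine sum_range_mul_nonpos_of_monotone (fun i j hij => ?_) (fun k hk => ?_) ?_
    · exact inv_anti₀ (hpos x j) (by exact_mod_cast Nat.add_le_add_right (hx hij) 1)
    · rw [sum_sub_distrib, sub_nonneg]
      exact_mod_cast hle k hk
    · rw [sum_sub_distrib, sub_eq_zero]
      exact_mod_cast hsum.symm
  have hlogprod : Real.log (∏ i ∈ range n, (y i + 1 : ℝ)) ≤
      Real.log (∏ i ∈ range n, (x i + 1 : ℝ)) := by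
    rw [Real.log_prod fun i _ => (hpos y i).ne', Real.log_prod fun i _ => (hpos x i).ne',
      ← sub_nonpos, ← sum_sub_distrib]
    exact (sum_le_sum fun i _ => hlog i).trans habel
  exact_mod_cast (Real.log_le_log_iff (prod_pos fun i _ => hpos y i)
    (prod_pos fun i _ => hpos x i)).1 hlogprod

section FinVectors

variable {M : ℕ}

def extendByZero (x : Fin M → ℕ) (k : ℕ) : ℕ :=
  if h : k < M then x ⟨k, h⟩ else 0

@[simp]
theorem extendByZero_val (x : Fin M → ℕ) (i : Fin M) : extendByZero x i = x i := by
  simp [extendByZero]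

theorem Antitone.extendByZero {x : Fin M → ℕ} (hx : Antitone x) :
    Antitone (extendByZero x) := by
  intro a b hab
  unfold _root_.extendByZero
  split_ifs with hb ha ha
  · exact hx (Fin.mk_le_mk.2 hab)
  · omega
  · exact Nat.zero_le _
  · exact le_rfl

theorem sum_univ_eq_sum_range_extendByZero (x : Fin M → ℕ) :
    ∑ i, x i = ∑ j ∈ range M, extendByZero x j := by
  simpa using Fin.sum_univ_eq_sum_range (extendByZero x) M

theorem prod_univ_eq_prod_range_extendByZero (x : Fin M → ℕ) :
    ∏ i, (x i + 1) = ∏ j ∈ range M, (extendByZero x j + 1) := by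
  simpa using Fin.prod_univ_eq_prod_range (fun j => extendByZero x j + 1) M

theorem sum_filter_val_lt_eq_sum_range_extendByZero (x : Fin M → ℕ) {k : ℕ} (hk : k ≤ M) :
    ∑ i ∈ univ.filter (fun i : Fin M => (i : ℕ) < k), x i =
      ∑ j ∈ range k, extendByZero x j := by
  calc ∑ i ∈ univ.filter (fun i : Fin M => (i : ℕ) < k), x i
      = ∑ i : Fin M, if (i : ℕ) < k then extendByZero x i else 0 := by simp [sum_filter]
    _ = ∑ j ∈ range M, if j < k then extendByZero x j else 0 :=
      Fin.sum_univ_eq_sum_range (fun j => if j < k then extendByZero x j else 0) M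
    _ = ∑ j ∈ range k, extendByZero x j := by
      rw [← sum_filter]
      congr 1
      ext j
      simp only [mem_filter, mem_range]
      omega

theorem sum_range_esymm_eq_prod_add_one (m : Fin M → ℕ) :
    ∑ k ∈ range (M + 1), esymm k m = ∏ i, (m i + 1) := by
  rw [prod_add m (fun _ => 1) univ, sum_powerset, card_univ, Fintype.card_fin]
  simp [esymm]

namespace Maj

variable {x y z : Fin M → ℕ}

theorem trans (h : Maj x y) (h' : Maj y z) : Maj x z :=
  ⟨fun k hk => (h.1 k hk).trans (h'.1 k hk), h.2.trans h'.2⟩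

theorem prod_add_one_le (hx : Antitone x) (h : Maj x y) :
    ∏ i, (y i + 1) ≤ ∏ i, (x i + 1) := by
  rw [prod_univ_eq_prod_range_extendByZero, prod_univ_eq_prod_range_extendByZero]
  refine prod_range_add_one_le_of_sum_range_le hx.extendByZero (fun k hk => ?_) ?_
  · simpa only [sum_filter_val_lt_eq_sum_range_extendByZero _ hk.le] using h.1 k hk
  · simpa only [sum_univ_eq_sum_range_extendByZero] using h.2

theorem ne_zero_of_ne_zero (hx : Antitone x) (h : Maj x y) {i : Fin M} (hy : y i ≠ 0) :
    x i ≠ 0 := by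
  intro hxi
  have hsplit (z : Fin M → ℕ) : ∑ j ∈ univ.filter (fun j : Fin M => (j : ℕ) < i), z j +
      ∑ j ∈ univ.filter (fun j : Fin M => ¬ (j : ℕ) < i), z j = ∑ j, z j :=
    sum_filter_add_sum_filter_not _ _ _
  have hx0 : ∑ j ∈ univ.filter (fun j : Fin M => ¬ (j : ℕ) < i), x j = 0 :=
    sum_eq_zero fun j hj => Nat.eq_zero_of_le_zero <| hxi ▸ hx (by simpa using hj)
  have hy0 : ∑ j ∈ univ.filter (fun j : Fin M => ¬ (j : ℕ) < i), y j = 0 := by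
    have hprefix := h.1 i i.isLt
    have hsplit_x := hsplit x
    have hsplit_y := hsplit y
    have htotal := h.2
    omega
  exact hy (sum_eq_zero_iff.1 hy0 i (by simp))

theorem alpha_le (hx : Antitone x) (h : Maj x y) : alpha y ≤ alpha x :=
  card_le_card fun i => by simpa using h.ne_zero_of_ne_zero hx

end Maj

end FinVectors

theorem runtime_monotone_in_majorization_chain_general {M : ℕ}
    (n₁ m₁ n₂ m₂ : Fin M → ℕ)
    (hn₁ : Antitone n₁) (hm₁ : Antitone m₁) (hn₂ : Antitone n₂)
    (h₁ : Maj n₁ m₁) (h₂ : Maj m₁ n₂) (h₃ : Maj n₂ m₂) :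
    T n₁ m₁ ≥ T n₂ m₂ := by
  have hprod : ∏ i, (m₂ i + 1) ≤ ∏ i, (m₁ i + 1) := (h₂.trans h₃).prod_add_one_le hm₁
  have hα₁ : alpha m₁ ≤ alpha n₁ := h₁.alpha_le hn₁
  have hα₂ : alpha n₂ ≤ alpha m₁ := h₂.alpha_le hm₁
  have hα₃ : alpha m₂ ≤ alpha n₂ := h₃.alpha_le hn₂
  simp only [T, sum_range_esymm_eq_prod_add_one]
  exact Nat.mul_le_mul (Nat.mul_le_mul hprod (hα₂.trans hα₁)) (hα₃.trans hα₂)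

theorem runtime_monotone_in_majorization_chain {M N : ℕ}
    (n₁ m₁ n₂ m₂ : Fin M → ℕ)
    (hn₁ : Antitone n₁) (hm₁ : Antitone m₁) (hn₂ : Antitone n₂) (hm₂ : Antitone m₂)
    (hs₁ : ∑ i, n₁ i = N) (hs₂ : ∑ i, m₁ i = N)
    (hs₃ : ∑ i, n₂ i = N) (hs₄ : ∑ i, m₂ i = N)
    (h₁ : Maj n₁ m₁) (h₂ : Maj m₁ n₂) (h₃ : Maj n₂ m₂) :
    T n₁ m₁ ≥ T n₂ m₂ :=
  runtime_monotone_in_majorization_chain_general n₁ m₁ n₂ m₂ hn₁ hm₁ hn₂ h₁ h₂ h₃
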